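/- Fix $T>0$, $H\in[1/2,1)$, $\mu\in\mathbb{R}$, and define $\sigma_u^+(s,t)=\frac{(t-s)^H}{u-\mu(t-s)+\frac{1}{2}(t^{2H}-s^{2H})}$ for $0\le s\le t\le T$. Then for all sufficiently large $u$, $\sigma_u^+$ attains its maximum over $\{(s,t):0\le s\le t\le T\}$ at the unique point $(0,T)$. -/
import Mathlib

/-- The standard deviation-type function `σ_u^+` from the drawup analysis. -/
noncomputable def sigmaPlus (H μ u s t : ℝ) : ℝ :=
  (t - s) ^ H / (u - μ * (t - s) + (t ^ (2*H) - s ^ (2*H)) / 2)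

private lemma mul_rpow_sub_one' {x p : ℝ} (hx : 0 ≤ x) (hp : 1 ≤ p) :
    x * x ^ (p - 1) = x ^ p := by
  rcases eq_or_lt_of_le hx with h | h
  · rcases eq_or_lt_of_le hp with hp1 | hp1
    · simp [← h, ← hp1]
    · rw [← h, Real.zero_rpow (by linarith), Real.zero_rpow (by linarith), mul_zero]
  · nth_rewrite 1 [← Real.rpow_one x]
    rw [← Real.rpow_add h, show 1 + (p - 1) = p by ring]

private lemma rpow_superadd' {s τ p : ℝ} (hs : 0 ≤ s) (hτ : 0 ≤ τ) (hp : 1 ≤ p) :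
    s ^ p + τ ^ p ≤ (s + τ) ^ p := by
  have h1 : s ^ p ≤ s * (s + τ) ^ (p - 1) := by
    calc s ^ p = s * s ^ (p - 1) := (mul_rpow_sub_one' hs hp).symm
    _ ≤ s * (s + τ) ^ (p - 1) :=
      mul_le_mul_of_nonneg_left (Real.rpow_le_rpow hs (by linarith) (by linarith)) hs
  have h2 : τ ^ p ≤ τ * (s + τ) ^ (p - 1) := by
    calc τ ^ p = τ * τ ^ (p - 1) := (mul_rpow_sub_one' hτ hp).symm
    _ ≤ τ * (s + τ) ^ (p - 1) :=
      mul_le_mul_of_nonneg_left (Real.rpow_le_rpow hτ (by linarith) (by linarith)) hτ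
  have h3 : s * (s + τ) ^ (p - 1) + τ * (s + τ) ^ (p - 1) = (s + τ) ^ p := by
    rw [← add_mul, mul_rpow_sub_one' (by linarith) hp]
  linarith

private lemma rpow_two_mul' {x : ℝ} (H : ℝ) (hx : 0 ≤ x) : x ^ (2*H) = (x ^ H) ^ 2 := by
  rw [show 2*H = H*2 by ring, Real.rpow_mul hx, Real.rpow_two]

/-- `T^H * τ ≤ τ^H * T` for `0 ≤ τ ≤ T`, `0 < H ≤ 1`. -/
private lemma keyB {T H τ : ℝ} (hT : 0 < T) (hτ0 : 0 ≤ τ) (hτT : τ ≤ T)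
    (hH0 : 0 < H) (hH1 : H ≤ 1) : T ^ H * τ ≤ τ ^ H * T := by
  rcases eq_or_lt_of_le hτ0 with h | h
  · simp [← h, Real.zero_rpow hH0.ne']
  · have e1 : τ ^ H * τ ^ (1-H) = τ := by
      rw [← Real.rpow_add h, show H + (1-H) = 1 by ring, Real.rpow_one]
    have e2 : T ^ H * T ^ (1-H) = T := by
      rw [← Real.rpow_add hT, show H + (1-H) = 1 by ring, Real.rpow_one]
    have i : T ^ H * τ ^ (1-H) ≤ T ^ H * T ^ (1-H) :=
      mul_le_mul_of_nonneg_left (Real.rpow_le_rpow hτ0 hτT (by linarith))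
        (Real.rpow_nonneg hT.le H)
    calc T ^ H * τ = τ ^ H * (T ^ H * τ ^ (1-H)) := by
          rw [show τ ^ H * (T ^ H * τ ^ (1-H)) = T ^ H * (τ ^ H * τ ^ (1-H)) by ring, e1]
    _ ≤ τ ^ H * (T ^ H * T ^ (1-H)) :=
      mul_le_mul_of_nonneg_left i (Real.rpow_nonneg hτ0 H)
    _ = τ ^ H * T := by rw [e2]

/-- `τ^H T - T^H τ ≤ T (T^H - τ^H)` for `0 ≤ τ ≤ T`, `1/2 ≤ H < 1`. -/
private lemma keyC {T H τ : ℝ} (hT : 0 < T) (hτ0 : 0 ≤ τ) (hτT : τ ≤ T)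
    (hH1 : 1/2 ≤ H) (hH2 : H < 1) :
    τ ^ H * T - T ^ H * τ ≤ T * (T ^ H - τ ^ H) := by
  have hH0 : 0 < H := by linarith
  rcases eq_or_lt_of_le hτ0 with h | h
  · rw [← h, Real.zero_rpow hH0.ne']
    have : 0 ≤ T * T ^ H := mul_nonneg hT.le (Real.rpow_nonneg hT.le H)
    nlinarith
  · have e1 : τ ^ H * τ ^ (1-H) = τ := by
      rw [← Real.rpow_add h, show H + (1-H) = 1 by ring, Real.rpow_one]
    have e2 : T ^ H * T ^ (1-H) = T := by
      rw [← Real.rpow_add hT, show H + (1-H) = 1 by ring, Real.rpow_one]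
    have e3 : τ ^ (1-H) * τ ^ (2*H-1) = τ ^ H := by
      rw [← Real.rpow_add h, show (1-H) + (2*H-1) = H by ring]
    have e4 : T ^ (1-H) * T ^ (2*H-1) = T ^ H := by
      rw [← Real.rpow_add hT, show (1-H) + (2*H-1) = H by ring]
    have h5 : τ ^ (2*H-1) ≤ T ^ (2*H-1) := Real.rpow_le_rpow hτ0 hτT (by linarith)
    have i1 : T ^ (1-H) * τ ^ H ≤ T ^ H * τ ^ (1-H) := by
      calc T ^ (1-H) * τ ^ H = τ ^ (1-H) * (T ^ (1-H) * τ ^ (2*H-1)) := by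
            rw [← e3]; ring
      _ ≤ τ ^ (1-H) * (T ^ (1-H) * T ^ (2*H-1)) :=
          mul_le_mul_of_nonneg_left
            (mul_le_mul_of_nonneg_left h5 (Real.rpow_nonneg hT.le _))
            (Real.rpow_nonneg hτ0 _)
      _ = T ^ H * τ ^ (1-H) := by rw [e4]; ring
    have i2 : T ^ H * τ ^ (1-H) ≤ T := by
      calc T ^ H * τ ^ (1-H) ≤ T ^ H * T ^ (1-H) :=
            mul_le_mul_of_nonneg_left
              (Real.rpow_le_rpow hτ0 hτT (by linarith : (0:ℝ) ≤ 1 - H))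
              (Real.rpow_nonneg hT.le H)
      _ = T := e2
    have hab : τ ^ H ≤ T ^ H := Real.rpow_le_rpow hτ0 hτT hH0.le
    have hc0 : 0 ≤ T - T ^ H * τ ^ (1-H) := by linarith
    have hcd : T - T ^ H * τ ^ (1-H) ≤ T - T ^ (1-H) * τ ^ H := by linarith
    have main : τ ^ H * (T - T ^ H * τ ^ (1-H)) ≤ T ^ H * (T - T ^ (1-H) * τ ^ H) :=
      mul_le_mul hab hcd hc0 (Real.rpow_nonneg hT.le H)
    have l1 : τ ^ H * (T - T ^ H * τ ^ (1-H)) = τ ^ H * T - T ^ H * τ := by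
      rw [show τ ^ H * (T - T ^ H * τ ^ (1-H))
            = τ ^ H * T - T ^ H * (τ ^ H * τ ^ (1-H)) by ring, e1]
    have l2 : T ^ H * (T - T ^ (1-H) * τ ^ H) = T * (T ^ H - τ ^ H) := by
      rw [show T ^ H * (T - T ^ (1-H) * τ ^ H)
            = T ^ H * T - (T ^ H * T ^ (1-H)) * τ ^ H by ring, e2]
      ring
    linarith

theorem sigmaPlus_unique_maximizer_large_H (T H μ : ℝ) (hT : 0 < T)
    (hH1 : 1/2 ≤ H) (hH2 : H < 1) :
    ∃ u0 : ℝ, ∀ u : ℝ, u0 ≤ u →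
      (∀ s t : ℝ, 0 ≤ s → s ≤ t → t ≤ T →
          0 < u - μ * (t - s) + (t ^ (2*H) - s ^ (2*H)) / 2) ∧
      (∀ s t : ℝ, 0 ≤ s → s ≤ t → t ≤ T →
          sigmaPlus H μ u s t ≤ sigmaPlus H μ u 0 T ∧
          (sigmaPlus H μ u s t = sigmaPlus H μ u 0 T → s = 0 ∧ t = T)) := by
  have hH0 : 0 < H := by linarith
  refine ⟨|μ| * T + T ^ (2*H) / 2 + 1, fun u hu => ?_⟩
  have hb2 : T ^ (2*H) = (T ^ H) ^ 2 := rpow_two_mul' H hT.le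
  have hμτbound : ∀ τ : ℝ, 0 ≤ τ → τ ≤ T → μ * τ ≤ |μ| * T := by
    intro τ h0 h1
    calc μ * τ ≤ |μ * τ| := le_abs_self _
    _ = |μ| * |τ| := abs_mul _ _
    _ = |μ| * τ := by rw [abs_of_nonneg h0]
    _ ≤ |μ| * T := mul_le_mul_of_nonneg_left h1 (abs_nonneg μ)
  -- positivity of denominators
  have hpos : ∀ s t : ℝ, 0 ≤ s → s ≤ t → t ≤ T →
      0 < u - μ * (t - s) + (t ^ (2*H) - s ^ (2*H)) / 2 := by
    intro s t hs hst htT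
    have h1 : s ^ (2*H) ≤ t ^ (2*H) := Real.rpow_le_rpow hs hst (by linarith)
    have h2 : μ * (t - s) ≤ |μ| * T := hμτbound _ (by linarith) (by linarith)
    have h3 : 0 ≤ T ^ (2*H) := Real.rpow_nonneg hT.le _
    linarith
  refine ⟨hpos, fun s t hs hst htT => ?_⟩
  have hτ0 : 0 ≤ t - s := by linarith
  have hτT : t - s ≤ T := by linarith
  have hσ0T : sigmaPlus H μ u 0 T = T ^ H / (u - μ * T + T ^ (2*H) / 2) := by
    simp [sigmaPlus, Real.zero_rpow (by positivity : (2*H) ≠ 0)]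
  rcases eq_or_lt_of_le hτT with heq | hlt
  · have hs0 : s = 0 := by linarith
    have ht0 : t = T := by linarith
    subst hs0; subst ht0
    exact ⟨le_refl _, fun _ => ⟨rfl, rfl⟩⟩
  · -- strict inequality case: t - s < T
    have hD2pos : 0 < u - μ * T + T ^ (2*H) / 2 := by
      have := hμτbound T hT.le le_rfl
      have h3 : 0 ≤ T ^ (2*H) := Real.rpow_nonneg hT.le _
      linarith
    have hμts : μ * (t - s) ≤ |μ| * T := hμτbound _ hτ0 hτT
    have hτ2H : 0 ≤ (t - s) ^ (2*H) := Real.rpow_nonneg hτ0 _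
    have hT2H : 0 ≤ T ^ (2*H) := Real.rpow_nonneg hT.le _
    have hD1'pos : 0 < u - μ * (t - s) + (t - s) ^ (2*H) / 2 := by linarith
    have hsuper : s ^ (2*H) + (t - s) ^ (2*H) ≤ t ^ (2*H) := by
      have h := rpow_superadd' hs hτ0 (p := 2*H) (by linarith)
      rwa [show s + (t - s) = t by ring] at h
    have hD1pos : 0 < u - μ * (t - s) + (t ^ (2*H) - s ^ (2*H)) / 2 :=
      hpos s t hs hst htT
    have step1 : sigmaPlus H μ u s t ≤
        (t - s) ^ H / (u - μ * (t - s) + (t - s) ^ (2*H) / 2) := by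
      unfold sigmaPlus
      exact div_le_div_of_nonneg_left (Real.rpow_nonneg hτ0 H) hD1'pos (by linarith)
    have step2 : (t - s) ^ H / (u - μ * (t - s) + (t - s) ^ (2*H) / 2)
        < T ^ H / (u - μ * T + T ^ (2*H) / 2) := by
      rw [div_lt_div_iff₀ hD1'pos hD2pos]
      rw [hb2, rpow_two_mul' H hτ0]
      have hab : (t - s) ^ H < T ^ H := Real.rpow_lt_rpow hτ0 hlt hH0
      have ha0 : 0 ≤ (t - s) ^ H := Real.rpow_nonneg hτ0 H
      have hb0 : 0 ≤ T ^ H := Real.rpow_nonneg hT.le H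
      have hB := keyB hT hτ0 hτT hH0 hH2.le
      have hC := keyC hT hτ0 hτT hH1 hH2
      have hmu : μ * (T ^ H * (t - s) - (t - s) ^ H * T)
          ≤ |μ| * (T * (T ^ H - (t - s) ^ H)) := by
        rcases le_or_gt 0 μ with hμ0 | hμ0
        · have h1 : μ * (T ^ H * (t - s) - (t - s) ^ H * T) ≤ 0 :=
            mul_nonpos_of_nonneg_of_nonpos hμ0 (by linarith)
          have h2 : 0 ≤ |μ| * (T * (T ^ H - (t - s) ^ H)) :=
            mul_nonneg (abs_nonneg μ) (mul_nonneg hT.le (by linarith))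
          linarith
        · rw [abs_of_neg hμ0]
          have h1 := mul_le_mul_of_nonneg_left hC (by linarith : (0:ℝ) ≤ -μ)
          nlinarith
      have P1 : 0 < (T ^ H - (t - s) ^ H) * (u - |μ| * T - (T ^ H) ^ 2 / 2) := by
        apply mul_pos (by linarith)
        have : |μ| * T + (T ^ H) ^ 2 / 2 + 1 ≤ u := by rw [← hb2]; linarith
        linarith
      have P3 : 0 ≤ T ^ H * (T ^ H - (t - s) ^ H) ^ 2 :=
        mul_nonneg hb0 (sq_nonneg _)
      nlinarith [hmu, P1, P3]
    have hfinal : sigmaPlus H μ u s t < sigmaPlus H μ u 0 T := by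
      rw [hσ0T]; exact lt_of_le_of_lt step1 step2
    exact ⟨hfinal.le, fun h => absurd h hfinal.ne⟩
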